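/- Assume S is positive definite and set Ā := S^{1/2} A S^{−1/2}. Then: (i) for every positive semidefinite P ∈ ℝ^{d×d}, 𝓔(P) = S^{−1/2} (Ā (I + S^{1/2} P S^{1/2})⁻¹) S^{1/2} and ‖Ā (I + S^{1/2} P S^{1/2})⁻¹‖₂ ≤ ‖Ā‖₂; (ii) for any positive semidefinite p₀, …, p_n ∈ ℝ^{d×d}, ‖𝓔(p_n) ⋯ 𝓔(p₁) 𝓔(p₀)‖₂ ≤ ‖S^{1/2}‖₂ ‖S^{−1/2}‖₂ ‖Ā‖₂^{n+1}. -/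

import Mathlib

open Matrix

noncomputable section

open Classical in
/-- The positive semidefinite square root of a positive semidefinite matrix
(junk value `0` if the matrix is not positive semidefinite). -/
def msqrt {d : ℕ} (M : Matrix (Fin d) (Fin d) ℝ) : Matrix (Fin d) (Fin d) ℝ :=
  if h : M.PosSemidef then
    (h.1.eigenvectorUnitary : Matrix (Fin d) (Fin d) ℝ) *
      diagonal ((↑) ∘ (Real.sqrt ∘ h.1.eigenvalues)) *
      (star h.1.eigenvectorUnitary : Matrix (Fin d) (Fin d) ℝ)
  else 0

/-- The spectral norm (largest singular value) of a real matrix, i.e. the operator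
norm of the induced linear map between Euclidean spaces. -/
def specNorm {m n : ℕ} (M : Matrix (Fin m) (Fin n) ℝ) : ℝ :=
  ‖LinearMap.toContinuousLinearMap (Matrix.toEuclideanLin M)‖

/-- The map `𝓔(P) := A (I + P S)⁻¹`. -/
def Emat {d : ℕ} (A S P : Matrix (Fin d) (Fin d) ℝ) : Matrix (Fin d) (Fin d) ℝ :=
  A * (1 + P * S)⁻¹

/-- The directed product `𝓔(p_n) ⋯ 𝓔(p₁) 𝓔(p₀)`. -/
def Eprod {d : ℕ} (A S : Matrix (Fin d) (Fin d) ℝ) (p : ℕ → Matrix (Fin d) (Fin d) ℝ) :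
    ℕ → Matrix (Fin d) (Fin d) ℝ
  | 0 => Emat A S (p 0)
  | n + 1 => Emat A S (p (n + 1)) * Eprod A S p n

/-!
Write `M := S^{1/2}`. Since `1 + P (M M) = M⁻¹ (1 + M P M) M`, conjugation by `M` turns `𝓔(P)` into
`Ā (1 + M P M)⁻¹`, which is `𝓔` itself for the data `(Ā, S := 1, P := M P M)`; in a product the
inner factors `M M⁻¹` cancel. For positive semidefinite `Q` we have `⟪y, (1 + Q) y⟫ ≥ ‖y‖²`, hence
`‖(1 + Q) y‖ ≥ ‖y‖` and `(1 + Q)⁻¹` is a contraction, so every conjugated factor has norm at most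
`‖Ā‖`; only the outer `M⁻¹` and `M` remain.
-/

open scoped MatrixOrder Matrix.Norms.L2Operator InnerProductSpace

lemma msqrt_eq_sqrt {d : ℕ} {M : Matrix (Fin d) (Fin d) ℝ} (hM : M.PosSemidef) :
    msqrt M = CFC.sqrt M := by
  rw [msqrt, dif_pos hM, CFC.sqrt_eq_real_sqrt M hM.nonneg, cfcₙ_eq_cfc, hM.1.cfc_eq,
    IsHermitian.cfc, Unitary.conjStarAlgAut_apply]
  rfl

section Conjugation

variable {n α : Type*} [Fintype n] [DecidableEq n] [CommRing α]

lemma inv_one_add_mul_mul_self {M : Matrix n n α} (hM : IsUnit M) (P : Matrix n n α) :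
    (1 + P * (M * M))⁻¹ = M⁻¹ * (1 + M * P * M)⁻¹ * M := by
  have hM' : IsUnit M.det := (isUnit_iff_isUnit_det M).1 hM
  have hconj : 1 + P * (M * M) = M⁻¹ * (1 + M * P * M) * M := by
    rw [Matrix.mul_add, Matrix.add_mul, Matrix.mul_one, nonsing_inv_mul _ hM']
    simp only [← Matrix.mul_assoc, nonsing_inv_mul _ hM', Matrix.one_mul]
  rw [hconj, Matrix.mul_inv_rev, Matrix.mul_inv_rev, nonsing_inv_nonsing_inv _ hM']
  simp only [Matrix.mul_assoc]

end Conjugation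

section Similarity

variable {d : ℕ} {M : Matrix (Fin d) (Fin d) ℝ}

@[simp]
lemma Emat_one (A P : Matrix (Fin d) (Fin d) ℝ) : Emat A 1 P = A * (1 + P)⁻¹ := by
  rw [Emat, Matrix.mul_one]

lemma Emat_mul_self (hM : IsUnit M) (A P : Matrix (Fin d) (Fin d) ℝ) :
    Emat A (M * M) P = M⁻¹ * Emat (M * A * M⁻¹) 1 (M * P * M) * M := by
  have hM' : IsUnit M.det := (isUnit_iff_isUnit_det M).1 hM
  rw [Emat, Emat, inv_one_add_mul_mul_self hM, Matrix.mul_one]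
  simp only [← Matrix.mul_assoc, nonsing_inv_mul _ hM', Matrix.one_mul]

lemma Eprod_mul_self (hM : IsUnit M) (A : Matrix (Fin d) (Fin d) ℝ)
    (p : ℕ → Matrix (Fin d) (Fin d) ℝ) (n : ℕ) :
    Eprod A (M * M) p n = M⁻¹ * Eprod (M * A * M⁻¹) 1 (fun k => M * p k * M) n * M := by
  have hM' : IsUnit M.det := (isUnit_iff_isUnit_det M).1 hM
  induction n with
  | zero => exact Emat_mul_self hM A (p 0)
  | succ n ih =>
    rw [Eprod, Eprod, ih, Emat_mul_self hM]
    simp only [Matrix.mul_assoc, mul_nonsing_inv_cancel_left _ _ hM']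

end Similarity

section Contraction

variable {n : Type*} [Fintype n] [DecidableEq n]

lemma norm_le_norm_toEuclideanCLM_one_add {Q : Matrix n n ℝ} (hQ : Q.PosSemidef)
    (y : EuclideanSpace ℝ n) : ‖y‖ ≤ ‖toEuclideanCLM (n := n) (𝕜 := ℝ) (1 + Q) y‖ := by
  set z := toEuclideanCLM (n := n) (𝕜 := ℝ) (1 + Q) y with hz
  have h : ‖y‖ ^ 2 ≤ ‖y‖ * ‖z‖ := calc
    ‖y‖ ^ 2 = ⟪y, y⟫_ℝ := (real_inner_self_eq_norm_sq y).symm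
    _ ≤ ⟪y, z⟫_ℝ := by
      rw [hz, map_add, map_one, _root_.add_apply, one_apply_eq_self, inner_add_right,
        inner_toEuclideanCLM]
      simpa using hQ.dotProduct_mulVec_nonneg y.ofLp
    _ ≤ ‖y‖ * ‖z‖ := real_inner_le_norm y z
  nlinarith [norm_nonneg y, norm_nonneg z]

lemma norm_inv_one_add_le_one {Q : Matrix n n ℝ} (hQ : Q.PosSemidef) : ‖(1 + Q)⁻¹‖ ≤ 1 := by
  have hdet : IsUnit (1 + Q).det :=
    (isUnit_iff_isUnit_det _).1 (PosDef.one.add_posSemidef hQ).isUnit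
  rw [cstar_norm_def]
  refine ContinuousLinearMap.opNorm_le_bound _ zero_le_one fun x => ?_
  calc ‖toEuclideanCLM (n := n) (𝕜 := ℝ) (1 + Q)⁻¹ x‖
      ≤ ‖toEuclideanCLM (n := n) (𝕜 := ℝ) (1 + Q)
          (toEuclideanCLM (n := n) (𝕜 := ℝ) (1 + Q)⁻¹ x)‖ :=
        norm_le_norm_toEuclideanCLM_one_add hQ _
    _ = 1 * ‖x‖ := by
      rw [← mul_apply_eq_comp, ← map_mul, mul_nonsing_inv _ hdet, map_one, one_apply_eq_self,
        one_mul]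

end Contraction

lemma norm_Emat_one_le {d : ℕ} (A : Matrix (Fin d) (Fin d) ℝ) {Q : Matrix (Fin d) (Fin d) ℝ}
    (hQ : Q.PosSemidef) : ‖Emat A 1 Q‖ ≤ ‖A‖ := calc
  ‖Emat A 1 Q‖ ≤ ‖A‖ * ‖(1 + Q)⁻¹‖ := by rw [Emat_one]; exact norm_mul_le _ _
  _ ≤ ‖A‖ := mul_le_of_le_one_right (norm_nonneg A) (norm_inv_one_add_le_one hQ)

lemma norm_Eprod_one_le {d : ℕ} (A : Matrix (Fin d) (Fin d) ℝ) {q : ℕ → Matrix (Fin d) (Fin d) ℝ}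
    {n : ℕ} (hq : ∀ k ≤ n, (q k).PosSemidef) : ‖Eprod A 1 q n‖ ≤ ‖A‖ ^ (n + 1) := by
  induction n with
  | zero =>
    rw [zero_add, pow_one]
    exact norm_Emat_one_le A (hq 0 le_rfl)
  | succ n ih => calc
    ‖Eprod A 1 q (n + 1)‖ ≤ ‖Emat A 1 (q (n + 1))‖ * ‖Eprod A 1 q n‖ := norm_mul_le _ _
    _ ≤ ‖A‖ * ‖A‖ ^ (n + 1) := by
      gcongr
      · exact norm_Emat_one_le A (hq _ le_rfl)
      · exact ih fun k hk => hq k (hk.trans n.le_succ)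
    _ = ‖A‖ ^ (n + 1 + 1) := (pow_succ' _ _).symm

lemma specNorm_eq_norm {d : ℕ} (M : Matrix (Fin d) (Fin d) ℝ) : specNorm M = ‖M‖ := rfl

theorem statement11_general {d : ℕ}
    (A : Matrix (Fin d) (Fin d) ℝ)
    (S : Matrix (Fin d) (Fin d) ℝ) (hS : S.PosDef)
    (Abar : Matrix (Fin d) (Fin d) ℝ) (hAbar : Abar = msqrt S * A * (msqrt S)⁻¹) :
    (∀ P : Matrix (Fin d) (Fin d) ℝ, P.PosSemidef →
      Emat A S P = (msqrt S)⁻¹ * (Abar * (1 + msqrt S * P * msqrt S)⁻¹) * msqrt S ∧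
      specNorm (Abar * (1 + msqrt S * P * msqrt S)⁻¹) ≤ specNorm Abar) ∧
    (∀ (n : ℕ) (p : ℕ → Matrix (Fin d) (Fin d) ℝ), (∀ k, k ≤ n → (p k).PosSemidef) →
      specNorm (Eprod A S p n) ≤
        specNorm (msqrt S) * specNorm ((msqrt S)⁻¹) * specNorm Abar ^ (n + 1)) := by
  obtain ⟨hMM, hM, hMh⟩ : msqrt S * msqrt S = S ∧ IsUnit (msqrt S) ∧ (msqrt S).IsHermitian := by
    rw [msqrt_eq_sqrt hS.posSemidef]
    exact ⟨CFC.sqrt_mul_sqrt_self S, (CFC.isUnit_sqrt_iff S).2 hS.isUnit,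
      (CFC.sqrt_nonneg S).posSemidef.isHermitian⟩
  generalize msqrt S = M at hMM hM hMh hAbar ⊢
  subst hMM hAbar
  have hconj (P : Matrix (Fin d) (Fin d) ℝ) (hP : P.PosSemidef) : (M * P * M).PosSemidef := by
    simpa only [hMh.eq] using hP.conjTranspose_mul_mul_same M
  simp only [specNorm_eq_norm]
  refine ⟨fun P hP => ⟨by simpa using Emat_mul_self hM A P, ?_⟩, fun n p hp => ?_⟩
  · simpa using norm_Emat_one_le (M * A * M⁻¹) (hconj P hP)
  calc ‖Eprod A (M * M) p n‖
      = ‖M⁻¹ * Eprod (M * A * M⁻¹) 1 (fun k => M * p k * M) n * M‖ := by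
        rw [Eprod_mul_self hM]
    _ ≤ ‖M⁻¹‖ * ‖Eprod (M * A * M⁻¹) 1 (fun k => M * p k * M) n‖ * ‖M‖ := norm_mul₃_le
    _ ≤ ‖M⁻¹‖ * ‖M * A * M⁻¹‖ ^ (n + 1) * ‖M‖ := by
        gcongr
        exact norm_Eprod_one_le _ fun k hk => hconj _ (hp k hk)
    _ = ‖M‖ * ‖M⁻¹‖ * ‖M * A * M⁻¹‖ ^ (n + 1) := by ring

/-- Assume `S := Bᵀ R₀⁻¹ B` is positive definite and set
`Ā := S^{1/2} A S^{−1/2}`.  Then: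
(i) for every positive semidefinite `P`,
`𝓔(P) = S^{−1/2} (Ā (I + S^{1/2} P S^{1/2})⁻¹) S^{1/2}` and
`‖Ā (I + S^{1/2} P S^{1/2})⁻¹‖₂ ≤ ‖Ā‖₂`;
(ii) for any positive semidefinite `p₀, …, p_n`,
`‖𝓔(p_n) ⋯ 𝓔(p₁) 𝓔(p₀)‖₂ ≤ ‖S^{1/2}‖₂ ‖S^{−1/2}‖₂ ‖Ā‖₂^{n+1}`. -/
theorem statement11 {d d₀ : ℕ} (hd : 1 ≤ d) (hd₀ : 1 ≤ d₀)
    (A : Matrix (Fin d) (Fin d) ℝ) (B : Matrix (Fin d₀) (Fin d) ℝ)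
    (R₀ : Matrix (Fin d₀) (Fin d₀) ℝ) (hR₀ : R₀.PosDef)
    (S : Matrix (Fin d) (Fin d) ℝ) (hSdef : S = Bᵀ * R₀⁻¹ * B) (hS : S.PosDef)
    (Abar : Matrix (Fin d) (Fin d) ℝ) (hAbar : Abar = msqrt S * A * (msqrt S)⁻¹) :
    (∀ P : Matrix (Fin d) (Fin d) ℝ, P.PosSemidef →
      Emat A S P = (msqrt S)⁻¹ * (Abar * (1 + msqrt S * P * msqrt S)⁻¹) * msqrt S ∧
      specNorm (Abar * (1 + msqrt S * P * msqrt S)⁻¹) ≤ specNorm Abar) ∧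
    (∀ (n : ℕ) (p : ℕ → Matrix (Fin d) (Fin d) ℝ), (∀ k, k ≤ n → (p k).PosSemidef) →
      specNorm (Eprod A S p n) ≤
        specNorm (msqrt S) * specNorm ((msqrt S)⁻¹) * specNorm Abar ^ (n + 1)) :=
  statement11_general A S hS Abar hAbar
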